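/- arXiv:2106.06460 — 12 statements merged into one kernel-verified Lean document; each statement's English description precedes it below -/
import Mathlib

section
/- Let E/F be a field extension of degree 3. Then the subgroup F^× · E^{×2} of E^× coincides with the set of elements of the form λ^#/λ = N_{E/F}(λ)·λ^{-2}; explicitly, for every u ∈ E^× the following are equivalent: (i) there exists λ ∈ E^× with u = (algebraMap F E (N_{E/F} λ)) · λ^{-2}; (ii) there exist c ∈ F^× and μ ∈ E^× with u = (algebraMap F E c) · μ². (This is the identity proved in Lemma 4.1, which shows that the rank-1 E-twisted composition algebras C_a and C_b are E-isomorphic exactly when a/b ∈ F^× E^{×2}.) -/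
/-- Lemma 4.1: for a cubic field extension `E/F`, the subgroup `F^× · E^{×2}` of `E^×`
coincides with the set of elements of the form `λ^#/λ = N_{E/F}(λ) · λ^{-2}`. -/
theorem statement0 (F E : Type*) [Field F] [Field E] [CharZero F] [Algebra F E]
    (hdeg : Module.finrank F E = 3) (u : E) (hu : u ≠ 0) :
    (∃ l : E, l ≠ 0 ∧ u = algebraMap F E (Algebra.norm F l) * l⁻¹ ^ 2) ↔
    (∃ c : F, c ≠ 0 ∧ ∃ μ : E, μ ≠ 0 ∧ u = algebraMap F E c * μ ^ 2) := by
  have hfd : FiniteDimensional F E := FiniteDimensional.of_finrank_pos (by omega)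
  constructor
  · rintro ⟨l, hl, rfl⟩
    have hN : Algebra.norm F l ≠ 0 := (Algebra.norm_ne_zero_iff).mpr hl
    exact ⟨Algebra.norm F l, hN, l⁻¹, inv_ne_zero hl, rfl⟩
  · rintro ⟨c, hc, μ, hμ, rfl⟩
    have hNμ : Algebra.norm F μ ≠ 0 := (Algebra.norm_ne_zero_iff).mpr hμ
    refine ⟨algebraMap F E (c * Algebra.norm F μ) * μ⁻¹, ?_, ?_⟩
    · exact mul_ne_zero (by simpa using mul_ne_zero hc hNμ) (inv_ne_zero hμ)
    · have hNinv : Algebra.norm F μ⁻¹ = (Algebra.norm F μ)⁻¹ := by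
        have : Algebra.norm F μ * Algebra.norm F μ⁻¹ = 1 := by
          rw [← map_mul, mul_inv_cancel₀ hμ, map_one]
        field_simp at this ⊢
        linear_combination this
      have h1 : Algebra.norm F (algebraMap F E (c * Algebra.norm F μ) * μ⁻¹)
          = (c * Algebra.norm F μ) ^ 3 * (Algebra.norm F μ)⁻¹ := by
        rw [map_mul, Algebra.norm_algebraMap, hdeg, hNinv]
      have hNE : algebraMap F E (Algebra.norm F μ) ≠ 0 := by
        simpa using hNμ
      have hcE : algebraMap F E c ≠ 0 := by
        simpa using hc
      rw [h1]
      simp only [map_mul, map_pow, map_inv₀, mul_inv, inv_inv]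
      field_simp
end

section
/- Set L¹ = {x ∈ L^× : N_{L/E}(x) = 1}, K¹ = {k ∈ K^× : N_{K/F}(k) = 1}, and (L^×)^{det} = {x ∈ L^× : N_{L/E}(x) ∈ algebraMap F E (F^×)}. Then the inclusion L¹ ⊆ (L^×)^{det} induces a group isomorphism L¹/K¹ ≅ (L^×)^{det}/K^×. Concretely: (a) every x ∈ L^× with N_{L/E}(x) ∈ algebraMap F E (F^×) can be written as x = k·y with k ∈ K^× (viewed in L) and y ∈ L^× satisfying N_{L/E}(y) = 1; (b) for k ∈ K^×, one has N_{L/E}(k) = 1 if and only if N_{K/F}(k) = 1. (Lemma 7.1 of the paper.) -/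
open Module Polynomial IntermediateField

/-- Norm via the constant coefficient of the minimal polynomial, when the element
generates the whole extension. -/
lemma aux_norm_coeff {A B : Type*} [Field A] [Field B] [Algebra A B] [FiniteDimensional A B]
    [Algebra.IsSeparable A B] (x : B)
    (hdeg : (minpoly A x).natDegree = Module.finrank A B) :
    Algebra.norm A x = (-1 : A) ^ Module.finrank A B * (minpoly A x).coeff 0 := by
  have hint : IsIntegral A x := Algebra.IsIntegral.isIntegral x
  have hfin : Module.finrank A A⟮x⟯ = Module.finrank A B := by
    rw [IntermediateField.adjoin.finrank hint, hdeg]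
  have hmul : Module.finrank A A⟮x⟯ * Module.finrank A⟮x⟯ B = Module.finrank A B :=
    Module.finrank_mul_finrank A A⟮x⟯ B
  have hpos : 0 < Module.finrank A B := Module.finrank_pos
  have h1 : Module.finrank A⟮x⟯ B = 1 := by
    rw [hfin] at hmul
    have h := Nat.eq_of_mul_eq_mul_left hpos (hmul.trans (mul_one (Module.finrank A B)).symm)
    exact h
  rw [Algebra.norm_eq_norm_adjoin A x, h1, pow_one]
  have hpb := Algebra.PowerBasis.norm_gen_eq_coeff_zero_minpoly
    (IntermediateField.adjoin.powerBasis hint)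
  rw [IntermediateField.adjoin.powerBasis_gen, IntermediateField.adjoin.powerBasis_dim,
    IntermediateField.minpoly_gen] at hpb
  rw [hpb, hdeg]

/-- Key computation: the norm from `L` to `E` of an element of `K` is the image in `E`
of its norm from `K` to `F`. -/
lemma aux_norm_K {F E K L : Type*} [Field F] [Field E] [Field K] [Field L] [CharZero F]
    [Algebra F E] [Algebra F K] [Algebra F L] [Algebra E L] [Algebra K L]
    [IsScalarTower F E L] [IsScalarTower F K L]
    (hE : Module.finrank F E = 3) (hK : Module.finrank F K = 2)
    (hL : Module.finrank F L = 6) (k : K) :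
    Algebra.norm E (algebraMap K L k) = algebraMap F E (Algebra.norm F k) := by
  haveI : CharZero E := charZero_of_injective_algebraMap (algebraMap F E).injective
  haveI : CharZero K := charZero_of_injective_algebraMap (algebraMap F K).injective
  haveI : FiniteDimensional F E := FiniteDimensional.of_finrank_pos (by omega)
  haveI : FiniteDimensional F K := FiniteDimensional.of_finrank_pos (by omega)
  haveI : FiniteDimensional F L := FiniteDimensional.of_finrank_pos (by omega)
  haveI : FiniteDimensional E L := FiniteDimensional.right F E L
  haveI : FiniteDimensional K L := FiniteDimensional.right F K L
  have hEL : Module.finrank E L = 2 := by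
    have := Module.finrank_mul_finrank F E L
    rw [hE, hL] at this; omega
  have hKL : Module.finrank K L = 3 := by
    have := Module.finrank_mul_finrank F K L
    rw [hK, hL] at this; omega
  by_cases hk : k ∈ (algebraMap F K).range
  · obtain ⟨c, rfl⟩ := hk
    have h1 : algebraMap K L (algebraMap F K c) = algebraMap E L (algebraMap F E c) := by
      rw [← IsScalarTower.algebraMap_apply, ← IsScalarTower.algebraMap_apply]
    rw [h1, Algebra.norm_algebraMap, Algebra.norm_algebraMap, hEL, hK, map_pow]
  · set z := algebraMap K L k with hz
    have hkint : IsIntegral F k := Algebra.IsIntegral.isIntegral k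
    have hzF : minpoly F z = minpoly F k :=
      minpoly.algebraMap_eq (algebraMap K L).injective k
    have hzint : IsIntegral F z := by rw [hz]; exact hkint.algebraMap
    have hzintE : IsIntegral E z := hzint.tower_top
    have hpdeg : (minpoly F k).natDegree = 2 := by
      have hle : (minpoly F k).natDegree ≤ 2 := hK ▸ minpoly.natDegree_le k
      have hpos : 0 < (minpoly F k).natDegree := minpoly.natDegree_pos hkint
      have hne1 : (minpoly F k).natDegree ≠ 1 := by
        intro h1
        have : (minpoly F k).degree = 1 := by
          rw [Polynomial.degree_eq_natDegree (minpoly.ne_zero hkint), h1]; rfl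
        exact hk (minpoly.degree_eq_one_iff.mp this)
      omega
    have hdvd : minpoly E z ∣ (minpoly F k).map (algebraMap F E) := by
      rw [← hzF]; exact minpoly.dvd_map_of_isScalarTower F E z
    have hqmonic : ((minpoly F k).map (algebraMap F E)).Monic :=
      (minpoly.monic hkint).map _
    have hqdeg : ((minpoly F k).map (algebraMap F E)).natDegree = 2 := by
      rw [Polynomial.natDegree_map, hpdeg]
    have hzdeg : (minpoly E z).natDegree = 2 := by
      have hle : (minpoly E z).natDegree ≤ 2 := by
        have := Polynomial.natDegree_le_of_dvd hdvd hqmonic.ne_zero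
        omega
      have hpos : 0 < (minpoly E z).natDegree := minpoly.natDegree_pos hzintE
      have hne1 : (minpoly E z).natDegree ≠ 1 := by
        intro h1
        have hdeg1 : (minpoly E z).degree = 1 := by
          rw [Polynomial.degree_eq_natDegree (minpoly.ne_zero hzintE), h1]; rfl
        obtain ⟨e, he⟩ := minpoly.degree_eq_one_iff.mp hdeg1
        -- e ∈ E maps to z, so minpoly F e = minpoly F k has degree 2, but it must divide 3
        have heF : minpoly F e = minpoly F k := by
          rw [← hzF, ← he, minpoly.algebraMap_eq (algebraMap E L).injective]
        have heint : IsIntegral F e := Algebra.IsIntegral.isIntegral e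
        have h2 : Module.finrank F F⟮e⟯ = 2 := by
          rw [IntermediateField.adjoin.finrank heint, heF, hpdeg]
        have hdvd3 : Module.finrank F F⟮e⟯ ∣ 3 := by
          rw [← hE]
          exact ⟨Module.finrank F⟮e⟯ E, (Module.finrank_mul_finrank F F⟮e⟯ E).symm⟩
        rw [h2] at hdvd3
        omega
      omega
    have hminE : minpoly E z = (minpoly F k).map (algebraMap F E) :=
      (Polynomial.eq_of_monic_of_dvd_of_natDegree_le (minpoly.monic hzintE) hqmonic hdvd
        (by omega)).symm
    have h1 : Algebra.norm E z = (-1 : E) ^ Module.finrank E L * (minpoly E z).coeff 0 :=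
      aux_norm_coeff z (by rw [hzdeg, hEL])
    have h2 : Algebra.norm F k = (-1 : F) ^ Module.finrank F K * (minpoly F k).coeff 0 :=
      aux_norm_coeff k (by rw [hpdeg, hK])
    rw [h1, h2, hEL, hK, hminE, Polynomial.coeff_map, map_mul, map_pow, map_neg, map_one]

/-- Lemma 7.1: with `E/F` cubic, `K/F` quadratic and `L = EK` of degree 6 over `F`,
the inclusion `L¹ ⊆ (L^×)^{det}` induces an isomorphism `L¹/K¹ ≅ (L^×)^{det}/K^×`.
Concretely: (a) every `x ∈ L^×` whose norm to `E` lies in (the image of) `F^×` can be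
written `x = k·y` with `k ∈ K^×` and `N_{L/E}(y) = 1`; (b) for `k ∈ K^×`,
`N_{L/E}(k) = 1` iff `N_{K/F}(k) = 1`. -/
theorem statement1 (F E K L : Type*) [Field F] [Field E] [Field K] [Field L] [CharZero F]
    [Algebra F E] [Algebra F K] [Algebra F L] [Algebra E L] [Algebra K L]
    [IsScalarTower F E L] [IsScalarTower F K L]
    (hE : Module.finrank F E = 3) (hK : Module.finrank F K = 2)
    (hL : Module.finrank F L = 6) :
    (∀ x : L, x ≠ 0 → (∃ c : F, c ≠ 0 ∧ Algebra.norm E x = algebraMap F E c) →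
      ∃ k : K, k ≠ 0 ∧ ∃ y : L, Algebra.norm E y = 1 ∧ x = algebraMap K L k * y)
    ∧
    (∀ k : K, k ≠ 0 →
      (Algebra.norm E (algebraMap K L k) = 1 ↔ Algebra.norm F k = 1)) := by
  haveI : CharZero E := charZero_of_injective_algebraMap (algebraMap F E).injective
  haveI : CharZero K := charZero_of_injective_algebraMap (algebraMap F K).injective
  haveI : FiniteDimensional F E := FiniteDimensional.of_finrank_pos (by omega)
  haveI : FiniteDimensional F K := FiniteDimensional.of_finrank_pos (by omega)
  haveI : FiniteDimensional F L := FiniteDimensional.of_finrank_pos (by omega)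
  haveI : FiniteDimensional E L := FiniteDimensional.right F E L
  haveI : FiniteDimensional K L := FiniteDimensional.right F K L
  constructor
  · intro x hx ⟨c, hc, hnorm⟩
    set k : K := Algebra.norm K x / algebraMap F K c with hkdef
    have hNKx : Algebra.norm K x ≠ 0 := by
      rw [Algebra.norm_ne_zero_iff]; exact hx
    have hcK : algebraMap F K c ≠ 0 := fun h => hc ((algebraMap F K).injective (by rw [h, map_zero]))
    have hk : k ≠ 0 := div_ne_zero hNKx hcK
    -- norm F k = c
    have hmulk : k * algebraMap F K c = Algebra.norm K x := div_mul_cancel₀ _ hcK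
    have hNFk : Algebra.norm F k = c := by
      have h1 : Algebra.norm F k * Algebra.norm F (algebraMap F K c)
          = Algebra.norm F (Algebra.norm K x) := by rw [← map_mul, hmulk]
      rw [Algebra.norm_algebraMap, hK] at h1
      rw [Algebra.norm_norm] at h1
      have h2 : Algebra.norm F x = c ^ 3 := by
        rw [← Algebra.norm_norm (R := F) (S := E) (a := x), hnorm, Algebra.norm_algebraMap, hE]
      rw [h2] at h1
      exact mul_right_cancel₀ (pow_ne_zero 2 hc) (h1.trans (by ring))
    have hzk : algebraMap K L k ≠ 0 :=
      fun h => hk ((algebraMap K L).injective (by rw [h, map_zero]))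
    refine ⟨k, hk, x / algebraMap K L k, ?_, (mul_div_cancel₀ x hzk).symm⟩
    have hNEk : Algebra.norm E (algebraMap K L k) = algebraMap F E c := by
      rw [aux_norm_K hE hK hL, hNFk]
    have hcE : algebraMap F E c ≠ 0 :=
      fun h => hc ((algebraMap F E).injective (by rw [h, map_zero]))
    have h3 : Algebra.norm E (algebraMap K L k) * Algebra.norm E (x / algebraMap K L k)
        = Algebra.norm E x := by rw [← map_mul, mul_div_cancel₀ x hzk]
    rw [hNEk, hnorm] at h3
    field_simp at h3
    exact h3
  · intro k hk
    rw [aux_norm_K hE hK hL]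
    constructor
    · intro h
      exact (algebraMap F E).injective (by rw [h, map_one])
    · intro h; rw [h, map_one]
end

section
/- If c ∈ F^× is such that algebraMap F E c = N_{L/E}(x) for some x ∈ L^×, then c ∈ N_{K/F}(K^×), i.e. there exists k ∈ K^× with c = N_{K/F}(k). Equivalently, the natural map F^×/N_{K/F}(K^×) → E^×/N_{L/E}(L^×) is injective. (This norm principle, relying on [E:F] being odd, is the key step in the proofs of Lemma 7.1 and Proposition 12.1 of the paper.) -/
/-- Norm principle (key step of Lemma 7.1 and Proposition 12.1): with `E/F` cubic,
`K/F` quadratic and `L = EK`, if `c ∈ F^×` becomes a norm from `L^×` to `E^×`,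
then `c` is a norm from `K^×`; i.e. `F^×/N_{K/F}(K^×) → E^×/N_{L/E}(L^×)` is injective. -/
theorem statement2 (F E K L : Type*) [Field F] [Field E] [Field K] [Field L] [CharZero F]
    [Algebra F E] [Algebra F K] [Algebra F L] [Algebra E L] [Algebra K L]
    [IsScalarTower F E L] [IsScalarTower F K L]
    (hE : Module.finrank F E = 3) (hK : Module.finrank F K = 2)
    (hL : Module.finrank F L = 6)
    (c : F) (hc : c ≠ 0)
    (h : ∃ x : L, x ≠ 0 ∧ algebraMap F E c = Algebra.norm E x) :
    ∃ k : K, k ≠ 0 ∧ c = Algebra.norm F k := by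
  obtain ⟨x, hx, hnorm⟩ := h
  haveI : FiniteDimensional F E := Module.finite_of_finrank_pos (by omega)
  haveI : FiniteDimensional F K := Module.finite_of_finrank_pos (by omega)
  haveI : FiniteDimensional F L := Module.finite_of_finrank_pos (by omega)
  haveI : FiniteDimensional K L := FiniteDimensional.right F K L
  haveI : CharZero L := charZero_of_injective_algebraMap (algebraMap F L).injective
  haveI : Algebra.IsSeparable F L := Algebra.IsSeparable.of_integral _ _
  -- take norms down to F
  have h1 : Algebra.norm F (Algebra.norm E x) = Algebra.norm F x :=
    Algebra.norm_norm (R := F) (S := E) (A := L) (a := x)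
  have h2 : Algebra.norm F (Algebra.norm K x) = Algebra.norm F x :=
    Algebra.norm_norm (R := F) (S := K) (A := L) (a := x)
  have h3 : Algebra.norm F (algebraMap F E c) = c ^ 3 := by
    rw [Algebra.norm_algebraMap, hE]
  set y : K := Algebra.norm K x with hy
  have hyc : Algebra.norm F y = c ^ 3 := by
    rw [h2, ← h1, ← hnorm, h3]
  have hy0 : y ≠ 0 := Algebra.norm_ne_zero_iff.mpr hx
  have hcK : (algebraMap F K c) ≠ 0 := by
    simpa using (algebraMap F K).injective.ne_iff.mpr hc
  refine ⟨y / algebraMap F K c, div_ne_zero hy0 hcK, ?_⟩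
  have hc2 : c ^ 2 ≠ 0 := pow_ne_zero _ hc
  have hnk : Algebra.norm F (y / algebraMap F K c) * c ^ 2 = c ^ 3 := by
    have hn2 := Algebra.norm_algebraMap (S := K) c
    rw [hK] at hn2
    rw [← hn2, ← map_mul, div_mul_cancel₀ _ hcK, hyc]
  have hfin : c * c ^ 2 = Algebra.norm F (y / algebraMap F K c) * c ^ 2 := by
    rw [hnk]; ring
  exact mul_right_cancel₀ hc2 hfin
end

section
/- For pairs (e₁,ν₁), (e₂,ν₂) ∈ E^× × K^×, declare (e₁,ν₁) ~ (e₂,ν₂) if there exists x ∈ L^× with e₁ = e₂ · N_{L/E}(x) and ν₁ = ν₂ · N_{L/K}(x). Let e ∈ E^× and ν ∈ K^× satisfy N_{E/F}(e) = N_{K/F}(ν). Then the following are equivalent: (i) ν ∈ N_{L/K}(L^×); (ii) there exists e' ∈ E^× with N_{E/F}(e') = 1 such that (e,ν) ~ (e', 1); (iii) there exist e' ∈ E^× and ν' ∈ F^× with N_{E/F}(e') = ν'² such that (e,ν) ~ (e', algebraMap F K ν'). (Equivalence of conditions (i), (ii), (iii) of Proposition 4.4 of the paper, characterizing when the Jordan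 algebra E ⊕ C_{e,ν} is not division.) -/
open Module IntermediateField Polynomial

theorem norm_inv_aux {K L : Type*} [Field K] [Field L] [Algebra K L]
    [FiniteDimensional K L] (x : L) :
    Algebra.norm K x⁻¹ = (Algebra.norm K x)⁻¹ := by
  rcases eq_or_ne x 0 with rfl | hx
  · simp
  · have h1 : Algebra.norm K x⁻¹ * Algebra.norm K x = 1 := by
      rw [← map_mul, inv_mul_cancel₀ hx, map_one]
    exact eq_inv_of_mul_eq_one_left h1

theorem norm_of_deg_eq_finrank {K L : Type*} [Field K] [Field L] [Algebra K L]
    [FiniteDimensional K L] [Algebra.IsSeparable K L] (x : L)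
    (h : (minpoly K x).natDegree = Module.finrank K L) :
    Algebra.norm K x = (-1) ^ Module.finrank K L * (minpoly K x).coeff 0 := by
  have hx : IsIntegral K x := Algebra.IsIntegral.isIntegral x
  have hfin : Module.finrank K K⟮x⟯ = Module.finrank K L := by
    rw [IntermediateField.adjoin.finrank hx, h]
  have hmul := Module.finrank_mul_finrank K K⟮x⟯ L
  have hpos : 0 < Module.finrank K L := Module.finrank_pos
  have h1 : Module.finrank K⟮x⟯ L = 1 := by
    rw [hfin] at hmul
    nlinarith
  rw [Algebra.norm_eq_norm_adjoin, h1, pow_one]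
  have hpb := Algebra.PowerBasis.norm_gen_eq_coeff_zero_minpoly (IntermediateField.adjoin.powerBasis hx)
  rw [IntermediateField.adjoin.powerBasis_gen] at hpb
  rw [hpb, IntermediateField.minpoly_gen, IntermediateField.adjoin.powerBasis_dim, h]

theorem norm_compat {F E K L : Type*} [Field F] [Field E] [Field K] [Field L] [CharZero F]
    [Algebra F E] [Algebra F K] [Algebra F L] [Algebra E L] [Algebra K L]
    [IsScalarTower F E L] [IsScalarTower F K L]
    (hE : Module.finrank F E = 3) (hK : Module.finrank F K = 2)
    (hL : Module.finrank F L = 6) (a : E) :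
    Algebra.norm K (algebraMap E L a) = algebraMap F K (Algebra.norm F a) := by
  have : CharZero K := charZero_of_injective_algebraMap (algebraMap F K).injective
  have : CharZero L := charZero_of_injective_algebraMap (algebraMap F L).injective
  have : FiniteDimensional F E := Module.finite_of_finrank_pos (by omega)
  have : FiniteDimensional F K := Module.finite_of_finrank_pos (by omega)
  have : FiniteDimensional F L := Module.finite_of_finrank_pos (by omega)
  have : FiniteDimensional K L := FiniteDimensional.right F K L
  have : FiniteDimensional E L := FiniteDimensional.right F E L
  have hKL : Module.finrank K L = 3 := by
    have := Module.finrank_mul_finrank F K L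
    rw [hK, hL] at this; omega
  have hia : IsIntegral F a := Algebra.IsIntegral.isIntegral a
  have hdvd : (minpoly F a).natDegree ∣ Module.finrank F E := minpoly.degree_dvd hia
  rw [hE] at hdvd
  have hd1 : 0 < (minpoly F a).natDegree := minpoly.natDegree_pos hia
  have hd : (minpoly F a).natDegree = 1 ∨ (minpoly F a).natDegree = 3 :=
    (Nat.Prime.eq_one_or_self_of_dvd (by norm_num) _ hdvd).imp id id
  rcases hd with hd | hd
  · obtain ⟨c, hc⟩ := (minpoly.natDegree_eq_one_iff).mp hd
    rw [← hc, ← IsScalarTower.algebraMap_apply,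
      IsScalarTower.algebraMap_apply F K L, Algebra.norm_algebraMap,
      Algebra.norm_algebraMap, hE, hKL, map_pow]
  · -- degree 3 case
    set p := minpoly F a with hp
    have hinjEL : Function.Injective (algebraMap E L) := (algebraMap E L).injective
    have hminL : minpoly F (algebraMap E L a) = p := minpoly.algebraMap_eq hinjEL a
    have hiaL : IsIntegral K (algebraMap E L a) := Algebra.IsIntegral.isIntegral _
    set q := minpoly K (algebraMap E L a) with hq
    have hqdvd : q ∣ p.map (algebraMap F K) :=
      minpoly.dvd_map_of_isScalarTower' F K L a
    have hqdeg_dvd : q.natDegree ∣ 3 := by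
      have := minpoly.degree_dvd hiaL
      rwa [hKL] at this
    have hqne1 : q.natDegree ≠ 1 := by
      intro h1
      obtain ⟨k, hk⟩ := (minpoly.natDegree_eq_one_iff).mp h1
      have h2 : minpoly F k = p := by
        have hinjKL : Function.Injective (algebraMap K L) := (algebraMap K L).injective
        have : minpoly F (algebraMap K L k) = minpoly F k := minpoly.algebraMap_eq hinjKL k
        rw [hk, hminL] at this
        exact this.symm
      have h3 : (minpoly F k).natDegree ∣ Module.finrank F K :=
        minpoly.degree_dvd (Algebra.IsIntegral.isIntegral k)
      rw [h2, hd, hK] at h3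
      omega
    have hqdeg : q.natDegree = 3 := by
      rcases (Nat.Prime.eq_one_or_self_of_dvd (by norm_num) _ hqdeg_dvd) with h | h
      · exact absurd h hqne1
      · exact h
    have hpm : (p.map (algebraMap F K)).Monic := (minpoly.monic hia).map _
    have hqm : q.Monic := minpoly.monic hiaL
    have hqeq : q = p.map (algebraMap F K) := by
      obtain ⟨c, hc⟩ := hqdvd
      have hpm0 : p.map (algebraMap F K) ≠ 0 := hpm.ne_zero
      have hc0 : c ≠ 0 := by rintro rfl; rw [mul_zero] at hc; exact hpm0 hc
      have hdeg : (p.map (algebraMap F K)).natDegree = q.natDegree + c.natDegree := by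
        rw [hc, Polynomial.natDegree_mul hqm.ne_zero hc0]
      rw [Polynomial.natDegree_map, hd, hqdeg] at hdeg
      have hcdeg : c.natDegree = 0 := by omega
      have hclead : c.leadingCoeff = 1 := by
        have := hpm
        rw [hc, Polynomial.Monic, Polynomial.leadingCoeff_mul, hqm.leadingCoeff, one_mul] at this
        exact this
      have : c = 1 := by
        rw [Polynomial.eq_C_of_natDegree_eq_zero hcdeg]
        rw [Polynomial.leadingCoeff, hcdeg] at hclead
        rw [hclead, Polynomial.C_1]
      rw [hc, this, mul_one]
    have hnq : Algebra.norm K (algebraMap E L a) =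
        (-1) ^ Module.finrank K L * q.coeff 0 :=
      norm_of_deg_eq_finrank _ (by rw [← hq, hqdeg, hKL])
    have hnp : Algebra.norm F a = (-1) ^ Module.finrank F E * p.coeff 0 :=
      norm_of_deg_eq_finrank _ (by rw [← hp, hd, hE])
    rw [hnq, hnp, hqeq, Polynomial.coeff_map, hKL, hE, map_mul, map_pow, map_neg, map_one]

/-- Equivalence of conditions (i), (ii), (iii) of Proposition 4.4: for `(e,ν)` with
`N_{E/F}(e) = N_{K/F}(ν)`, the following are equivalent: (i) `ν` is a norm from `L^×`
to `K^×`; (ii) `(e,ν)` is equivalent to some `(e',1)` with `N_{E/F}(e') = 1`;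
(iii) `(e,ν)` is equivalent to some `(e',ν')` with `ν' ∈ F^×` and `N_{E/F}(e') = ν'²`.
Here `(e₁,ν₁) ~ (e₂,ν₂)` iff there is `x ∈ L^×` with `e₁ = e₂·N_{L/E}(x)` and
`ν₁ = ν₂·N_{L/K}(x)`. -/
theorem statement3 (F E K L : Type*) [Field F] [Field E] [Field K] [Field L] [CharZero F]
    [Algebra F E] [Algebra F K] [Algebra F L] [Algebra E L] [Algebra K L]
    [IsScalarTower F E L] [IsScalarTower F K L]
    (hE : Module.finrank F E = 3) (hK : Module.finrank F K = 2)
    (hL : Module.finrank F L = 6)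
    (e : E) (ν : K) (he : e ≠ 0) (hν : ν ≠ 0)
    (hnorm : Algebra.norm F e = Algebra.norm F ν) :
    ((∃ x : L, x ≠ 0 ∧ ν = Algebra.norm K x) ↔
      (∃ e' : E, e' ≠ 0 ∧ Algebra.norm F e' = 1 ∧
        ∃ x : L, x ≠ 0 ∧ e = e' * Algebra.norm E x ∧ ν = Algebra.norm K x))
    ∧
    ((∃ e' : E, e' ≠ 0 ∧ Algebra.norm F e' = 1 ∧
        ∃ x : L, x ≠ 0 ∧ e = e' * Algebra.norm E x ∧ ν = Algebra.norm K x) ↔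
      (∃ e' : E, e' ≠ 0 ∧ ∃ ν' : F, ν' ≠ 0 ∧ Algebra.norm F e' = ν' ^ 2 ∧
        ∃ x : L, x ≠ 0 ∧ e = e' * Algebra.norm E x ∧
          ν = algebraMap F K ν' * Algebra.norm K x)) := by
  have : CharZero K := charZero_of_injective_algebraMap (algebraMap F K).injective
  have : CharZero E := charZero_of_injective_algebraMap (algebraMap F E).injective
  have : CharZero L := charZero_of_injective_algebraMap (algebraMap F L).injective
  have : FiniteDimensional F E := Module.finite_of_finrank_pos (by omega)
  have : FiniteDimensional F K := Module.finite_of_finrank_pos (by omega)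
  have : FiniteDimensional F L := Module.finite_of_finrank_pos (by omega)
  have : FiniteDimensional K L := FiniteDimensional.right F K L
  have : FiniteDimensional E L := FiniteDimensional.right F E L
  have hKL : Module.finrank K L = 3 := by
    have := Module.finrank_mul_finrank F K L
    rw [hK, hL] at this; omega
  have hEL : Module.finrank E L = 2 := by
    have := Module.finrank_mul_finrank F E L
    rw [hE, hL] at this; omega
  have normE_ne : ∀ x : L, x ≠ 0 → Algebra.norm E x ≠ 0 :=
    fun x hx => Algebra.norm_ne_zero_iff.mpr hx
  have normK_ne : ∀ x : L, x ≠ 0 → Algebra.norm K x ≠ 0 :=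
    fun x hx => Algebra.norm_ne_zero_iff.mpr hx
  have normFe_ne : Algebra.norm F e ≠ 0 := Algebra.norm_ne_zero_iff.mpr he
  constructor
  · constructor
    · rintro ⟨x, hx, hxν⟩
      refine ⟨e * (Algebra.norm E x)⁻¹, mul_ne_zero he (inv_ne_zero (normE_ne x hx)),
        ?_, x, hx, ?_, hxν⟩
      · have h1 : Algebra.norm F (Algebra.norm E x) = Algebra.norm F x :=
          Algebra.norm_norm (R := F) (S := E) (a := x)
        have h2 : Algebra.norm F (Algebra.norm K x) = Algebra.norm F x :=
          Algebra.norm_norm (R := F) (S := K) (a := x)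
        rw [map_mul, norm_inv_aux, h1, ← h2, ← hxν, ← hnorm]
        field_simp
      · rw [mul_assoc, inv_mul_cancel₀ (normE_ne x hx), mul_one]
    · rintro ⟨e', _, _, x, hx, _, hxν⟩
      exact ⟨x, hx, hxν⟩
  · constructor
    · rintro ⟨e', he', hn1, x, hx, hee, hxν⟩
      exact ⟨e', he', 1, one_ne_zero, by rw [hn1, one_pow], x, hx, hee,
        by rw [map_one, one_mul]; exact hxν⟩
    · rintro ⟨e', he', ν', hν', hn, x, hx, hee, hνν⟩
      have hν'L : algebraMap F L ν' ≠ 0 :=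
        fun h => hν' ((algebraMap F L).injective (by rw [h, map_zero]))
      have he'L : algebraMap E L e' ≠ 0 :=
        fun h => he' ((algebraMap E L).injective (by rw [h, map_zero]))
      have hν'K : algebraMap F K ν' ≠ 0 :=
        fun h => hν' ((algebraMap F K).injective (by rw [h, map_zero]))
      obtain ⟨z, hz, nKz⟩ : ∃ z : L, z ≠ 0 ∧ Algebra.norm K z = algebraMap F K ν' := by
        refine ⟨algebraMap F L ν' * (algebraMap E L e')⁻¹,
          mul_ne_zero hν'L (inv_ne_zero he'L), ?_⟩
        rw [map_mul, norm_inv_aux, IsScalarTower.algebraMap_apply F K L,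
          Algebra.norm_algebraMap, norm_compat hE hK hL, hn, hKL, map_pow]
        field_simp
      have nEz_ne : Algebra.norm E z ≠ 0 := normE_ne z hz
      refine ⟨e' * (Algebra.norm E z)⁻¹, mul_ne_zero he' (inv_ne_zero nEz_ne), ?_,
        x * z, mul_ne_zero hx hz, ?_, ?_⟩
      · have h1 : Algebra.norm F (Algebra.norm E z) = Algebra.norm F z :=
          Algebra.norm_norm (R := F) (S := E) (a := z)
        have h2 : Algebra.norm F (Algebra.norm K z) = Algebra.norm F z :=
          Algebra.norm_norm (R := F) (S := K) (a := z)
        rw [map_mul, norm_inv_aux, h1, ← h2, nKz, Algebra.norm_algebraMap, hK, hn]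
        field_simp
      · rw [map_mul, hee]
        field_simp
      · rw [map_mul, nKz, hνν]
        ring
end

section
/- Let F be a field and let x₁, x₂, x₃ ∈ M₂(F) be 2×2 matrices with det x₁ = det x₂ = det x₃ = 0 and trace(x₃ · x₂ · x₁) = 1. Then there exist invertible matrices g₁, g₂, g₃ ∈ GL₂(F) with det g₁ = det g₂ = det g₃ such that g₃ · x₁ · g₂⁻¹ = e₁₁, g₁ · x₂ · g₃⁻¹ = e₁₁ and g₂ · x₃ · g₁⁻¹ = e₁₁, where e₁₁ is the matrix unit with 1 in the (1,1)-entry and zeros elsewhere. (Transitivity part of Proposition A (P:orbit2): the group GL₂(F³)^{det} acts transitively on the set of elements x of the rank-4 twisted composition algebra C_B (B = M₂(F)) with Q(x) = 0 and N_C(x) = 1.) -/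
lemma rank1_fact (F : Type*) [Field F] (x : Matrix (Fin 2) (Fin 2) F) (h : x.det = 0) :
    ∃ u v : Fin 2 → F, x = Matrix.vecMulVec u v := by
  rw [Matrix.det_fin_two] at h
  by_cases ha : x 0 0 ≠ 0
  · refine ⟨![x 0 0, x 1 0], ![1, x 0 1 / x 0 0], ?_⟩
    ext i j
    fin_cases i <;> fin_cases j <;>
      simp [Matrix.vecMulVec_apply] <;> field_simp <;> linear_combination h
  · push_neg at ha
    by_cases hb : x 0 1 ≠ 0
    · have hc : x 1 0 = 0 := by
        have := h; rw [ha] at this; simp at this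
        rcases this with h' | h' <;> tauto
      refine ⟨![x 0 1, x 1 1], ![0, 1], ?_⟩
      ext i j
      fin_cases i <;> fin_cases j <;> simp [Matrix.vecMulVec_apply, ha, hc]
    · push_neg at hb
      refine ⟨![0, 1], ![x 1 0, x 1 1], ?_⟩
      ext i j
      fin_cases i <;> fin_cases j <;> simp [Matrix.vecMulVec_apply, ha, hb]

/-- Transitivity part of Proposition A (P:orbit2): if `x₁, x₂, x₃ ∈ M₂(F)` have
determinant `0` and `trace(x₃x₂x₁) = 1`, then there are `g₁, g₂, g₃ ∈ GL₂(F)` with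
equal determinants such that `g₃x₁g₂⁻¹ = g₁x₂g₃⁻¹ = g₂x₃g₁⁻¹ = e₁₁`. -/
theorem statement4 (F : Type*) [Field F]
    (x₁ x₂ x₃ : Matrix (Fin 2) (Fin 2) F)
    (h1 : x₁.det = 0) (h2 : x₂.det = 0) (h3 : x₃.det = 0)
    (htr : (x₃ * x₂ * x₁).trace = 1) :
    ∃ g₁ g₂ g₃ : Matrix (Fin 2) (Fin 2) F,
      IsUnit g₁.det ∧ IsUnit g₂.det ∧ IsUnit g₃.det ∧
      g₁.det = g₂.det ∧ g₂.det = g₃.det ∧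
      g₃ * x₁ * g₂⁻¹ = !![(1 : F), 0; 0, 0] ∧
      g₁ * x₂ * g₃⁻¹ = !![(1 : F), 0; 0, 0] ∧
      g₂ * x₃ * g₁⁻¹ = !![(1 : F), 0; 0, 0] := by
  obtain ⟨u₁, v₁, rfl⟩ := rank1_fact F x₁ h1
  obtain ⟨u₂, v₂, rfl⟩ := rank1_fact F x₂ h2
  obtain ⟨u₃, v₃, rfl⟩ := rank1_fact F x₃ h3
  simp only [Matrix.trace_fin_two, Matrix.mul_apply, Matrix.vecMulVec_apply,
    Fin.sum_univ_two] at htr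
  have habc : (v₂ 0 * u₁ 0 + v₂ 1 * u₁ 1) * (v₃ 0 * u₂ 0 + v₃ 1 * u₂ 1) *
      (v₁ 0 * u₃ 0 + v₁ 1 * u₃ 1) = 1 := by linear_combination htr
  have hα : v₂ 0 * u₁ 0 + v₂ 1 * u₁ 1 ≠ 0 := by
    intro h; rw [h] at habc; simp at habc
  have hγ : v₁ 0 * u₃ 0 + v₁ 1 * u₃ 1 ≠ 0 := by
    intro h; rw [h] at habc; simp at habc
  set γ : F := v₁ 0 * u₃ 0 + v₁ 1 * u₃ 1 with hγdef
  set α : F := v₂ 0 * u₁ 0 + v₂ 1 * u₁ 1 with hαdef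
  clear_value α γ
  set g₁ : Matrix (Fin 2) (Fin 2) F :=
    !![γ * v₃ 0, γ * v₃ 1; α * (-(u₂ 1)), α * (u₂ 0)] with hg₁
  set g₂ : Matrix (Fin 2) (Fin 2) F :=
    !![v₁ 0, v₁ 1; γ⁻¹ * (-(u₃ 1)), γ⁻¹ * (u₃ 0)] with hg₂
  set g₃ : Matrix (Fin 2) (Fin 2) F :=
    !![α⁻¹ * (v₂ 0), α⁻¹ * (v₂ 1); -(u₁ 1), u₁ 0] with hg₃
  have hd1 : g₁.det = 1 := by
    rw [hg₁, Matrix.det_fin_two_of]; linear_combination habc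
  have hd2 : g₂.det = 1 := by
    rw [hg₂, Matrix.det_fin_two_of]; field_simp; linear_combination -hγdef
  have hd3 : g₃.det = 1 := by
    rw [hg₃, Matrix.det_fin_two_of]; field_simp; linear_combination -hαdef
  have hu1 : IsUnit g₁.det := by rw [hd1]; exact isUnit_one
  have hu2 : IsUnit g₂.det := by rw [hd2]; exact isUnit_one
  have hu3 : IsUnit g₃.det := by rw [hd3]; exact isUnit_one
  have key1 : g₃ * Matrix.vecMulVec u₁ v₁ = !![(1 : F), 0; 0, 0] * g₂ := by
    ext i j
    fin_cases i <;> fin_cases j <;>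
      simp [hg₂, hg₃, Matrix.mul_apply, Matrix.vecMulVec_apply, Fin.sum_univ_two]
    · field_simp; linear_combination -v₁ 0 * hαdef
    · field_simp; linear_combination -v₁ 1 * hαdef
    · ring
    · ring
  have key2 : g₁ * Matrix.vecMulVec u₂ v₂ = !![(1 : F), 0; 0, 0] * g₃ := by
    ext i j
    fin_cases i <;> fin_cases j <;>
      simp [hg₁, hg₃, Matrix.mul_apply, Matrix.vecMulVec_apply, Fin.sum_univ_two]
    · field_simp; linear_combination v₂ 0 * habc
    · field_simp; linear_combination v₂ 1 * habc
    · ring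
    · ring
  have key3 : g₂ * Matrix.vecMulVec u₃ v₃ = !![(1 : F), 0; 0, 0] * g₁ := by
    ext i j
    fin_cases i <;> fin_cases j <;>
      simp [hg₁, hg₂, Matrix.mul_apply, Matrix.vecMulVec_apply, Fin.sum_univ_two]
    · linear_combination -v₃ 0 * hγdef
    · linear_combination -v₃ 1 * hγdef
    · ring
    · ring
  refine ⟨g₁, g₂, g₃, hu1, hu2, hu3, by rw [hd1, hd2], by rw [hd2, hd3], ?_, ?_, ?_⟩
  · rw [key1, Matrix.mul_assoc, Matrix.mul_nonsing_inv _ hu2, Matrix.mul_one]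
  · rw [key2, Matrix.mul_assoc, Matrix.mul_nonsing_inv _ hu3, Matrix.mul_one]
  · rw [key3, Matrix.mul_assoc, Matrix.mul_nonsing_inv _ hu1, Matrix.mul_one]
end

section
/- Let F be a field and g₁, g₂, g₃ ∈ GL₂(F) with det g₁ = det g₂ = det g₃. Then g₃ · e₁₁ · g₂⁻¹ = e₁₁, g₁ · e₁₁ · g₃⁻¹ = e₁₁ and g₂ · e₁₁ · g₁⁻¹ = e₁₁ hold simultaneously if and only if there exist a, d ∈ F^× such that g₁ = g₂ = g₃ = diag(a, d). (Stabilizer part of Proposition A (P:orbit2): the stabilizer in GL₂(F³)^{det} of the element x₀ = (e₁₁, e₁₁, e₁₁) consists exactly of the triples (diag(a,d), diag(a,d), diag(a,d)).) -/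
lemma aux_comm {F : Type*} [Field F] (g : Matrix (Fin 2) (Fin 2) F)
    (h : IsUnit g.det) (hc : g * !![(1 : F), 0; 0, 0] = !![(1 : F), 0; 0, 0] * g) :
    g * !![(1 : F), 0; 0, 0] * g⁻¹ = !![(1 : F), 0; 0, 0] := by
  rw [hc, mul_assoc, Matrix.mul_nonsing_inv _ h, mul_one]

lemma aux_eq {F : Type*} [Field F] (g₃ g₂ : Matrix (Fin 2) (Fin 2) F)
    (h₂ : IsUnit g₂.det)
    (h : g₃ * !![(1 : F), 0; 0, 0] * g₂⁻¹ = !![(1 : F), 0; 0, 0]) :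
    g₃ * !![(1 : F), 0; 0, 0] = !![(1 : F), 0; 0, 0] * g₂ := by
  calc g₃ * !![(1 : F), 0; 0, 0] = g₃ * !![(1 : F), 0; 0, 0] * (g₂⁻¹ * g₂) := by
        rw [Matrix.nonsing_inv_mul _ h₂, mul_one]
    _ = !![(1 : F), 0; 0, 0] * g₂ := by rw [← mul_assoc, h]

/-- Stabilizer part of Proposition A (P:orbit2): for `g₁, g₂, g₃ ∈ GL₂(F)` with equal
determinants, the equations `g₃e₁₁g₂⁻¹ = g₁e₁₁g₃⁻¹ = g₂e₁₁g₁⁻¹ = e₁₁` hold iff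
`g₁ = g₂ = g₃ = diag(a,d)` for some `a, d ∈ F^×`. -/
theorem statement5 (F : Type*) [Field F]
    (g₁ g₂ g₃ : Matrix (Fin 2) (Fin 2) F)
    (h₁ : IsUnit g₁.det) (h₂ : IsUnit g₂.det) (h₃ : IsUnit g₃.det)
    (h12 : g₁.det = g₂.det) (h23 : g₂.det = g₃.det) :
    (g₃ * !![(1 : F), 0; 0, 0] * g₂⁻¹ = !![(1 : F), 0; 0, 0] ∧
     g₁ * !![(1 : F), 0; 0, 0] * g₃⁻¹ = !![(1 : F), 0; 0, 0] ∧
     g₂ * !![(1 : F), 0; 0, 0] * g₁⁻¹ = !![(1 : F), 0; 0, 0]) ↔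
    (∃ a d : F, a ≠ 0 ∧ d ≠ 0 ∧
      g₁ = !![a, 0; 0, d] ∧ g₂ = !![a, 0; 0, d] ∧ g₃ = !![a, 0; 0, d]) := by
  constructor
  · rintro ⟨e32, e13, e21⟩
    have k32 := aux_eq g₃ g₂ h₂ e32
    have k13 := aux_eq g₁ g₃ h₃ e13
    have k21 := aux_eq g₂ g₁ h₁ e21
    -- entrywise
    have ent : ∀ (A B : Matrix (Fin 2) (Fin 2) F),
        A * !![(1 : F), 0; 0, 0] = !![(1 : F), 0; 0, 0] * B →
        A 0 0 = B 0 0 ∧ A 1 0 = 0 ∧ B 0 1 = 0 := by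
      intro A B h
      refine ⟨?_, ?_, ?_⟩
      · have := congrFun (congrFun h 0) 0
        simpa [Matrix.mul_apply, Fin.sum_univ_two] using this
      · have := congrFun (congrFun h 1) 0
        simpa [Matrix.mul_apply, Fin.sum_univ_two] using this
      · have := congrFun (congrFun h 0) 1
        simpa [Matrix.mul_apply, Fin.sum_univ_two] using this.symm
    obtain ⟨a32, z3, z2'⟩ := ent _ _ k32
    obtain ⟨a13, z1, z3'⟩ := ent _ _ k13
    obtain ⟨a21, z2, z1'⟩ := ent _ _ k21
    set a := g₁ 0 0 with ha
    have d1 : g₁.det = a * g₁ 1 1 := by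
      rw [Matrix.det_fin_two, z1, z1']; ring
    have d2 : g₂.det = a * g₂ 1 1 := by
      rw [Matrix.det_fin_two, z2, z2', ← a21]; ring
    have d3 : g₃.det = a * g₃ 1 1 := by
      rw [Matrix.det_fin_two, z3, z3', a32, ← a21]; ring
    have hane : a ≠ 0 := by
      intro h0
      rw [d1, h0, zero_mul] at h₁
      simpa using h₁
    have hdne : g₁ 1 1 ≠ 0 := by
      intro h0
      rw [d1, h0, mul_zero] at h₁
      simpa using h₁
    have dd2 : g₂ 1 1 = g₁ 1 1 := by
      have := h12; rw [d1, d2] at this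
      exact (mul_left_cancel₀ hane this.symm)
    have dd3 : g₃ 1 1 = g₁ 1 1 := by
      have := h12.trans h23; rw [d1, d3] at this
      exact (mul_left_cancel₀ hane this.symm)
    refine ⟨a, g₁ 1 1, hane, hdne, ?_, ?_, ?_⟩
    · ext i j; fin_cases i <;> fin_cases j <;> simp [z1, z1', ha]
    · ext i j; fin_cases i <;> fin_cases j <;> simp [z2, z2', dd2, ← a21]
    · ext i j; fin_cases i <;> fin_cases j <;> simp [z3, z3', dd3, a32, ← a21]
  · rintro ⟨a, d, ha, hd, rfl, rfl, rfl⟩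
    have hc : !![a, 0; 0, d] * !![(1 : F), 0; 0, 0] = !![(1 : F), 0; 0, 0] * !![a, 0; 0, d] := by
      ext i j; fin_cases i <;> fin_cases j <;> simp [Matrix.mul_apply, Fin.sum_univ_two]
    exact ⟨aux_comm _ h₂ hc, aux_comm _ h₃ hc, aux_comm _ h₁ hc⟩
end

section
/- Let E/F be a Galois extension of degree 3 of fields of characteristic zero and let σ be a generator of Gal(E/F), acting entrywise on 2×2 matrices over E. Then for every x ∈ M₂(E) with det x = 0 there exists α ∈ E such that trace(σ²(x) · σ(x) · x) = algebraMap F E (N_{E/F}(α)). (This is the key computation in the proof of Proposition A.2 (P:embeddings): the norm form N_C(x) = Tr(x^{σ²} x^{σ} x) of the rank-4 twisted composition algebra C_B^E, B = M₂(F), takes only values in N_{E/F}(E) on elements with Q(x) = 0, so the rank-2 algebra C(λ) embeds into C_B^E only if λ is a norm from E.) -/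
/-- Key computation in Proposition A.2 (P:embeddings): for `E/F` Galois cubic with
Galois group generated by `σ`, and any `x ∈ M₂(E)` with `det x = 0`, the value
`trace(σ²(x)·σ(x)·x)` is a norm from `E`. -/
theorem statement6 (F E : Type*) [Field F] [Field E] [CharZero F] [Algebra F E]
    [IsGalois F E] (hdeg : Module.finrank F E = 3)
    (σ : E ≃ₐ[F] E) (hσ : σ ≠ 1)
    (x : Matrix (Fin 2) (Fin 2) E) (hx : x.det = 0) :
    ∃ α : E,
      (x.map (⇑σ ∘ ⇑σ) * x.map ⇑σ * x).trace = algebraMap F E (Algebra.norm F α) := by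
  classical
  have : FiniteDimensional F E := Module.finite_of_finrank_pos (by omega)
  have hcard : Fintype.card (E ≃ₐ[F] E) = 3 := by
    rw [← Nat.card_eq_fintype_card, IsGalois.card_aut_eq_finrank]; exact hdeg
  have hord : orderOf σ = 3 := by
    have hdvd : orderOf σ ∣ 3 := hcard ▸ orderOf_dvd_card
    rcases (Nat.prime_three).eq_one_or_self_of_dvd _ hdvd with h | h
    · exact absurd (orderOf_eq_one_iff.mp h) hσ
    · exact h
  have hσ3 : σ ^ 3 = 1 := by rw [← hord]; exact pow_orderOf_eq_one σ
  have h3 : ∀ a : E, σ (σ (σ a)) = a := by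
    intro a
    have := DFunLike.congr_fun hσ3 a
    simpa [pow_succ, AlgEquiv.mul_apply] using this
  -- rank factorization
  have hfac : ∃ u v : Fin 2 → E, ∀ k l, x k l = u k * v l := by
    by_cases hz : ∀ k l, x k l = 0
    · exact ⟨0, 0, fun k l => by simp [hz k l]⟩
    · push_neg at hz
      obtain ⟨i, j, hij⟩ := hz
      refine ⟨fun k => x k j, fun l => x i l / x i j, fun k l => ?_⟩
      rw [mul_div_assoc', eq_div_iff hij]
      rw [Matrix.det_fin_two] at hx
      have h2 : ∀ m : Fin 2, m = 0 ∨ m = 1 := by omega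
      rcases h2 k with rfl | rfl <;> rcases h2 l with rfl | rfl <;>
        rcases h2 i with rfl | rfl <;> rcases h2 j with rfl | rfl <;>
        first | ring1 | linear_combination hx | linear_combination -hx
  obtain ⟨u, v, huv⟩ := hfac
  set t : E := v 0 * σ (σ (u 0)) + v 1 * σ (σ (u 1)) with ht
  refine ⟨t, ?_⟩
  -- norm as product over the Galois group
  have hne1 : σ * σ ≠ 1 := by
    intro h
    have : orderOf σ ∣ 2 := orderOf_dvd_of_pow_eq_one (by rw [pow_two]; exact h)
    rw [hord] at this; omega
  have hne2 : σ * σ ≠ σ := by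
    intro h
    exact hσ (mul_left_cancel (a := σ) (by rw [h, mul_one]))
  have huniv : (Finset.univ : Finset (E ≃ₐ[F] E)) = {1, σ, σ * σ} := by
    symm
    apply Finset.eq_univ_of_card
    rw [hcard]
    rw [Finset.card_insert_of_notMem (by simp [Ne.symm hσ, Ne.symm hne1]),
      Finset.card_insert_of_notMem (by simp [Ne.symm hne2])]
    simp
  rw [Algebra.norm_eq_prod_automorphisms, huniv]
  rw [Finset.prod_insert (by simp [Ne.symm hσ, Ne.symm hne1]),
    Finset.prod_insert (by simp [Ne.symm hne2]), Finset.prod_singleton]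
  simp only [AlgEquiv.one_apply, AlgEquiv.mul_apply]
  have hst : σ t = σ (v 0) * u 0 + σ (v 1) * u 1 := by
    simp [ht, map_add, map_mul, h3]
  have hsst : σ (σ t) = σ (σ (v 0)) * σ (u 0) + σ (σ (v 1)) * σ (u 1) := by
    rw [hst]; simp [map_add, map_mul]
  rw [hsst, hst]
  simp only [Matrix.trace_fin_two, Matrix.mul_apply, Matrix.map_apply, Fin.sum_univ_two,
    Function.comp_apply, huv, map_mul, ht]
  ring
end

section
/- Let σ be an E-algebra automorphism of L with σ ≠ id (so σ generates Gal(L/E)). For y ∈ L^× with N_{L/K}(y) = algebraMap F K (c) for some c ∈ F^×, define b(y) := (algebraMap F E c) · N_{L/E}(y)⁻¹ ∈ E^×. Then: (1) if y' ∈ L^× also satisfies N_{L/K}(y') ∈ algebraMap F K (F^×) and σ(y')·y'⁻¹ = σ(y)·y⁻¹, then b(y')·b(y)⁻¹ ∈ F^×·E^{×2}, i.e. there exist c₀ ∈ F^× and μ ∈ E^× with b(y') = (algebraMap F E c₀)·μ²·b(y); (2) if moreover there exists s ∈ L^× with N_{L/E}(s) = 1, N_{L/K}(s) = 1 and σ(y)·y⁻¹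 = s², then b(y) itself lies in F^×·E^{×2}. (Well-definedness of the map b : T_{E,K_C}(F)/T_{E,K_C}(F)² → H¹(F,Z_E) = E^×/F^×E^{×2} in §4.8 of the paper.) -/
/-- Well-definedness of the map `b : T_{E,K_C}(F)/T_{E,K_C}(F)² → E^×/F^×E^{×2}`
(§4.8): with `σ` the nontrivial `E`-automorphism of `L`, and
`b(y) = c · N_{L/E}(y)⁻¹` whenever `N_{L/K}(y) = c ∈ F^×`:
(1) if `σ(y')/y' = σ(y)/y` then `b(y')/b(y) ∈ F^×·E^{×2}`;
(2) if `σ(y)/y = s²` with `N_{L/E}(s) = N_{L/K}(s) = 1` then `b(y) ∈ F^×·E^{×2}`. -/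
theorem statement7 (F E K L : Type*) [Field F] [Field E] [Field K] [Field L] [CharZero F]
    [Algebra F E] [Algebra F K] [Algebra F L] [Algebra E L] [Algebra K L]
    [IsScalarTower F E L] [IsScalarTower F K L]
    (hE : Module.finrank F E = 3) (hK : Module.finrank F K = 2)
    (hL : Module.finrank F L = 6)
    (σ : L ≃ₐ[E] L) (hσ : σ ≠ 1) :
    (∀ (y y' : L) (c c' : F), y ≠ 0 → y' ≠ 0 → c ≠ 0 → c' ≠ 0 →
      Algebra.norm K y = algebraMap F K c →
      Algebra.norm K y' = algebraMap F K c' →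
      σ y' * y'⁻¹ = σ y * y⁻¹ →
      ∃ c₀ : F, c₀ ≠ 0 ∧ ∃ μ : E, μ ≠ 0 ∧
        algebraMap F E c' * (Algebra.norm E y')⁻¹ =
          algebraMap F E c₀ * μ ^ 2 * (algebraMap F E c * (Algebra.norm E y)⁻¹))
    ∧
    (∀ (y : L) (c : F), y ≠ 0 → c ≠ 0 →
      Algebra.norm K y = algebraMap F K c →
      (∃ s : L, Algebra.norm E s = 1 ∧ Algebra.norm K s = 1 ∧ σ y * y⁻¹ = s ^ 2) →
      ∃ c₀ : F, c₀ ≠ 0 ∧ ∃ μ : E, μ ≠ 0 ∧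
        algebraMap F E c * (Algebra.norm E y)⁻¹ = algebraMap F E c₀ * μ ^ 2) := by
  classical
  haveI : CharZero E := charZero_of_injective_algebraMap (algebraMap F E).injective
  haveI : CharZero L := charZero_of_injective_algebraMap (algebraMap F L).injective
  haveI : FiniteDimensional F L := FiniteDimensional.of_finrank_pos (by rw [hL]; norm_num)
  haveI : FiniteDimensional E L := FiniteDimensional.right F E L
  have hEL : Module.finrank E L = 2 := by
    have h := Module.finrank_mul_finrank F E L
    rw [hE, hL] at h; omega
  -- L/E is normal (degree 2)
  haveI : Normal E L := by
    refine normal_iff.mpr fun x => ?_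
    have hint : IsIntegral E x := IsIntegral.of_finite E x
    refine ⟨hint, ?_⟩
    have hdeg : (minpoly E x).natDegree ≤ 2 := hEL ▸ minpoly.natDegree_le x
    have hroot : ((minpoly E x).map (algebraMap E L)).IsRoot x := by
      rw [Polynomial.IsRoot, Polynomial.eval_map, ← Polynomial.aeval_def]
      exact minpoly.aeval E x
    obtain ⟨q, hq⟩ := Polynomial.dvd_iff_isRoot.mpr hroot
    have hmapne : (minpoly E x).map (algebraMap E L) ≠ 0 :=
      Polynomial.map_ne_zero (minpoly.ne_zero hint)
    have hqne : q ≠ 0 := by rintro rfl; rw [mul_zero] at hq; exact hmapne hq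
    have hXne : (Polynomial.X - Polynomial.C x) ≠ 0 := Polynomial.X_sub_C_ne_zero x
    have hdq : q.natDegree ≤ 1 := by
      have h1 : ((minpoly E x).map (algebraMap E L)).natDegree =
          (Polynomial.X - Polynomial.C x).natDegree + q.natDegree := by
        rw [hq, Polynomial.natDegree_mul hXne hqne]
      rw [Polynomial.natDegree_map, Polynomial.natDegree_X_sub_C] at h1
      omega
    rw [hq]
    exact (Polynomial.Splits.X_sub_C _).mul
      (Polynomial.Splits.of_natDegree_le_one hdq)
  haveI : IsGalois E L := ⟨⟩
  have hcard : Fintype.card (L ≃ₐ[E] L) = 2 := by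
    rw [← Nat.card_eq_fintype_card, IsGalois.card_aut_eq_finrank, hEL]
  have huniv : (Finset.univ : Finset (L ≃ₐ[E] L)) = {1, σ} := by
    symm
    apply Finset.eq_univ_of_card
    rw [hcard, Finset.card_insert_of_notMem (by simpa using hσ.symm), Finset.card_singleton]
  have hnorm : ∀ x : L, algebraMap E L (Algebra.norm E x) = x * σ x := by
    intro x
    rw [Algebra.norm_eq_prod_automorphisms, huniv,
      Finset.prod_insert (by simpa using hσ.symm), Finset.prod_singleton]
    rfl
  have htrace : ∀ x : L, algebraMap E L (Algebra.trace E L x) = x + σ x := by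
    intro x
    rw [trace_eq_sum_automorphisms, huniv,
      Finset.sum_insert (by simpa using hσ.symm), Finset.sum_singleton]
    rfl
  have hfix : ∀ x : L, σ x = x → ∃ t : E, algebraMap E L t = x := by
    intro x hx
    refine ⟨Algebra.trace E L x / 2, ?_⟩
    have h2 : (2 : L) ≠ 0 := two_ne_zero
    rw [map_div₀, htrace x, hx, map_ofNat]
    field_simp
    ring
  have hinj : Function.Injective (algebraMap E L) := (algebraMap E L).injective
  have hσne : ∀ x : L, x ≠ 0 → σ x ≠ 0 := by
    intro x hx h
    exact hx (σ.injective (by simp [h]))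
  constructor
  · -- part 1
    intro y y' c c' hy hy' hc hc' hNy hNy' hss
    have hσy : σ y ≠ 0 := hσne y hy
    -- t := y'/y is fixed by σ
    have hss' : σ y' * y = σ y * y' := by
      field_simp at hss
      linear_combination hss
    have hfixq : σ (y' * y⁻¹) = y' * y⁻¹ := by
      rw [map_mul, map_inv₀]
      field_simp
      linear_combination hss'
    obtain ⟨t, ht⟩ := hfix _ hfixq
    have htne : t ≠ 0 := by
      intro h
      rw [h, map_zero] at ht
      have : y' = 0 := by
        field_simp at ht
        rw [← ht, zero_mul]
      exact hy' this
    have hy'eq : y' = algebraMap E L t * y := by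
      rw [ht]; field_simp
    have hNy'E : Algebra.norm E y' = t ^ 2 * Algebra.norm E y := by
      rw [hy'eq, map_mul, Algebra.norm_algebraMap, hEL]
    have hNyne : Algebra.norm E y ≠ 0 := (Algebra.norm_ne_zero_iff).mpr hy
    have hcE : algebraMap F E c ≠ 0 := fun h => hc ((algebraMap F E).injective (by rw [h, map_zero]))
    have hcE' : algebraMap F E c' ≠ 0 := fun h => hc' ((algebraMap F E).injective (by rw [h, map_zero]))
    refine ⟨c' * c⁻¹, mul_ne_zero hc' (inv_ne_zero hc), t⁻¹, inv_ne_zero htne, ?_⟩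
    rw [hNy'E, map_mul, map_inv₀]
    field_simp
  · -- part 2
    intro y c hy hc hNy ⟨s, hsE, hsK, hs2⟩
    have hsne : s ≠ 0 := by
      intro h
      rw [h] at hsE
      rw [Algebra.norm_zero] at hsE
      exact one_ne_zero hsE.symm
    have hσs : s * σ s = 1 := by
      have := hnorm s
      rw [hsE, map_one] at this
      exact this.symm
    have hσy : σ y = s ^ 2 * y := by
      field_simp at hs2
      linear_combination hs2
    -- u := s * y is fixed by σ
    have hufix : σ (s * y) = s * y := by
      rw [map_mul, hσy]
      have : σ s = s⁻¹ := by
        field_simp at hσs ⊢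
        linear_combination hσs
      rw [this]
      field_simp
    obtain ⟨t, ht⟩ := hfix _ hufix
    have htne : t ≠ 0 := by
      intro h
      rw [h, map_zero] at ht
      exact mul_ne_zero hsne hy ht.symm
    have hNyt : Algebra.norm E y = t ^ 2 := by
      apply hinj
      rw [hnorm y, map_pow, ht, hσy]
      ring
    refine ⟨c, hc, t⁻¹, inv_ne_zero htne, ?_⟩
    rw [hNyt]
    field_simp
end

section
/- Let a, e ∈ E^×, ν ∈ K^×, and let y ∈ L^× satisfy N_{L/K}(y) = algebraMap F K (c) for some c ∈ F^×. Put a' := a · (algebraMap F E c) · N_{L/E}(y)⁻¹ ∈ E^×. If x ∈ L^× satisfies N_{L/E}(x) = e⁻¹ · (algebraMap F E (N_{E/F} a)) · a⁻¹ and N_{L/K}(x) = (algebraMap F K (N_{E/F} a)) · ν⁻¹, then x' := x·y satisfies N_{L/E}(x') = e⁻¹ · (algebraMap F E (N_{E/F} a')) · a'⁻¹ and N_{L/K}(x') = (algebraMap F K (N_{E/F} a')) · ν⁻¹. In particular N_{E/F}(a') = N_{E/F}(a)·c. (This is the computational core of Proposition 4.5 (P:isom-torsor): it shows x ∈ X_{a,e,ν}(F)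 implies xy ∈ X_{a',e,ν}(F), where a' = a·b(t) for t = σ(y)/y, so that a ↦ g_C(a) is an isomorphism of torsors.) -/
/-- Computational core of Proposition 4.5 (P:isom-torsor): if `x ∈ X_{a,e,ν}(F)` and
`N_{L/K}(y) = c ∈ F^×`, then with `a' = a·c·N_{L/E}(y)⁻¹` one has `x·y ∈ X_{a',e,ν}(F)`;
in particular `N_{E/F}(a') = N_{E/F}(a)·c`. -/
theorem statement8 (F E K L : Type*) [Field F] [Field E] [Field K] [Field L] [CharZero F]
    [Algebra F E] [Algebra F K] [Algebra F L] [Algebra E L] [Algebra K L]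
    [IsScalarTower F E L] [IsScalarTower F K L]
    (hE : Module.finrank F E = 3) (hK : Module.finrank F K = 2)
    (hL : Module.finrank F L = 6)
    (a e : E) (ν : K) (y : L) (c : F) (x : L) (a' : E)
    (ha : a ≠ 0) (he : e ≠ 0) (hν : ν ≠ 0) (hy : y ≠ 0) (hc : c ≠ 0) (hx : x ≠ 0)
    (hyc : Algebra.norm K y = algebraMap F K c)
    (ha' : a' = a * algebraMap F E c * (Algebra.norm E y)⁻¹)
    (hx1 : Algebra.norm E x = e⁻¹ * (algebraMap F E (Algebra.norm F a) * a⁻¹))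
    (hx2 : Algebra.norm K x = algebraMap F K (Algebra.norm F a) * ν⁻¹) :
    Algebra.norm E (x * y) = e⁻¹ * (algebraMap F E (Algebra.norm F a') * a'⁻¹) ∧
    Algebra.norm K (x * y) = algebraMap F K (Algebra.norm F a') * ν⁻¹ ∧
    Algebra.norm F a' = Algebra.norm F a * c := by
  have hCE : CharZero E := charZero_of_injective_algebraMap (algebraMap F E).injective
  have hCK : CharZero K := charZero_of_injective_algebraMap (algebraMap F K).injective
  have hCL : CharZero L := charZero_of_injective_algebraMap (algebraMap F L).injective
  have hFE : FiniteDimensional F E := FiniteDimensional.of_finrank_pos (by rw [hE]; norm_num)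
  have hFK : FiniteDimensional F K := FiniteDimensional.of_finrank_pos (by rw [hK]; norm_num)
  have hFL : FiniteDimensional F L := FiniteDimensional.of_finrank_pos (by rw [hL]; norm_num)
  have hEL : FiniteDimensional E L := FiniteDimensional.right F E L
  have hKL : FiniteDimensional K L := FiniteDimensional.right F K L
  have hNEy : Algebra.norm E y ≠ 0 := Algebra.norm_ne_zero_iff.mpr hy
  have hmapc : algebraMap F E c ≠ 0 := fun h => hc ((map_eq_zero _).mp h)
  have key : Algebra.norm F (Algebra.norm E y) = c ^ 2 := by
    rw [Algebra.norm_norm, ← Algebra.norm_norm (R := F) (S := K) (A := L) (a := y), hyc,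
      Algebra.norm_algebraMap, hK]
  have ha'' : a' * Algebra.norm E y = a * algebraMap F E c := by
    rw [ha']; field_simp
  have hNa' : Algebra.norm F a' = Algebra.norm F a * c := by
    have h := congrArg (Algebra.norm F) ha''
    rw [map_mul, map_mul, key, Algebra.norm_algebraMap, hE] at h
    have hc2 : c ^ 2 ≠ 0 := pow_ne_zero _ hc
    apply mul_right_cancel₀ hc2
    rw [h]; ring
  refine ⟨?_, ?_, hNa'⟩
  · rw [map_mul, hx1, hNa', ha', map_mul]
    field_simp
  · rw [map_mul, hx2, hNa', hyc, map_mul]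
    ring
end

section
/- Let F be a field and x₁, x₂, x₃, y₁, y₂, y₃ ∈ F. Consider the 3×3 matrix X = [[0, x₃, y₂], [y₃, 0, x₁], [x₂, y₁, 0]] over F. Then the adjugate (classical adjoint) of X is the zero matrix if and only if there exist indices i ≠ j in {1,2,3} such that x_k = 0 for every k ≠ i and y_k = 0 for every k ≠ j. (This is the criterion 'x^# = 0 holds if and only if there is a pair of indices i ≠ j such that all coordinates of x are 0 except possibly x_i and y_j' used in §8.1 to compute Ω^⊥ in the split case E = F³, J = M₃(F).) -/
private lemma aux3 {F : Type*} [Field F] (a : Fin 3 → F)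
    (h01 : a 0 = 0 ∨ a 1 = 0) (h02 : a 0 = 0 ∨ a 2 = 0) (h12 : a 1 = 0 ∨ a 2 = 0) :
    ∃ i, ∀ k, k ≠ i → a k = 0 := by
  by_cases h0 : a 0 = 0
  · by_cases h1 : a 1 = 0
    · exact ⟨2, fun k hk => by fin_cases k <;> simp_all⟩
    · exact ⟨1, fun k hk => by fin_cases k <;> simp_all⟩
  · exact ⟨0, fun k hk => by fin_cases k <;> simp_all⟩

/-- Criterion of §8.1: for the hollow matrix `X = [[0,x₃,y₂],[y₃,0,x₁],[x₂,y₁,0]]`,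
the adjugate `X^#` vanishes iff there are indices `i ≠ j` such that all coordinates of
`x` are `0` except possibly `xᵢ` and all coordinates of `y` are `0` except possibly
`yⱼ`. -/
theorem statement9 (F : Type*) [Field F] (x y : Fin 3 → F) :
    Matrix.adjugate !![(0 : F), x 2, y 1; y 2, 0, x 0; x 1, y 0, 0] = 0 ↔
    ∃ i j : Fin 3, i ≠ j ∧ (∀ k, k ≠ i → x k = 0) ∧ (∀ k, k ≠ j → y k = 0) := by
  constructor
  · intro h
    rw [← Matrix.ext_iff] at h
    simp [Matrix.adjugate_fin_three, Fin.forall_fin_succ] at h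
    obtain ⟨⟨hxy0, hy10, hx20⟩, ⟨hx01, hyx1, hy12⟩, hy20, hx21, hxy2⟩ := h
    obtain ⟨i, hx⟩ := aux3 x hx01 hx20.symm hx21.symm
    obtain ⟨j, hy⟩ := aux3 y hy10.symm hy20.symm hy12
    by_cases hij : i = j
    · subst hij
      have hmix : x i = 0 ∨ y i = 0 := by
        fin_cases i
        · exact hxy0
        · exact hyx1.symm
        · exact hxy2
      rcases hmix with hxi | hyi
      · have hxall : ∀ k, x k = 0 := by
          intro k; by_cases hk : k = i
          · subst hk; exact hxi
          · exact hx k hk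
        obtain ⟨i', hi'⟩ : ∃ i' : Fin 3, i' ≠ i := by
          fin_cases i
          · exact ⟨1, by decide⟩
          · exact ⟨0, by decide⟩
          · exact ⟨0, by decide⟩
        exact ⟨i', i, hi', fun k _ => hxall k, hy⟩
      · have hyall : ∀ k, y k = 0 := by
          intro k; by_cases hk : k = i
          · subst hk; exact hyi
          · exact hy k hk
        obtain ⟨j', hj'⟩ : ∃ j' : Fin 3, i ≠ j' := by
          fin_cases i
          · exact ⟨1, by decide⟩
          · exact ⟨0, by decide⟩
          · exact ⟨0, by decide⟩
        exact ⟨i, j', hj', hx, fun k _ => hyall k⟩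
    · exact ⟨i, j, hij, hx, hy⟩
  · rintro ⟨i, j, hij, hx, hy⟩
    rw [← Matrix.ext_iff]
    simp only [Matrix.adjugate_fin_three, Fin.forall_fin_succ]
    simp [Fin.forall_fin_succ]
    fin_cases i <;> fin_cases j <;>
      first
      | exact absurd rfl hij
      | (refine ⟨⟨?_, ?_, ?_⟩, ⟨?_, ?_, ?_⟩, ?_, ?_, ?_⟩ <;>
          first
          | exact Or.inl (hx _ (by decide))
          | exact Or.inr (hx _ (by decide))
          | exact Or.inl (hy _ (by decide))
          | exact Or.inr (hy _ (by decide)))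
end

section
/- Let r ∈ ℤ/3ℤ with r ≠ 0. For every natural number n, the number N of functions f : Fin n → ℤ/3ℤ such that f(i) ≠ 0 for all i and ∑_i f(i) = r satisfies 3·N = 2ⁿ − (−1)ⁿ (as integers). (This counting identity is the 'amusing exercise' of §13.8: the number of degree-3 central simple algebras B over a number field whose invariants are nonzero exactly on a prescribed set of n places and constrained at those places, yielding the multiplicity (2ⁿ + (−1)^{n+1})/3.) -/
open Finset

private noncomputable def cnt (n : ℕ) (r : ZMod 3) : ℕ :=
  Nat.card {f : Fin n → ZMod 3 // (∀ i, f i ≠ 0) ∧ ∑ i, f i = r}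

private lemma cnt_zero (r : ZMod 3) : cnt 0 r = if r = 0 then 1 else 0 := by
  unfold cnt
  split_ifs with h
  · subst h
    have : Unique {f : Fin 0 → ZMod 3 // (∀ i, f i ≠ 0) ∧ ∑ i, f i = 0} :=
      ⟨⟨⟨fun i => i.elim0, fun i => i.elim0, by simp⟩⟩, by
        rintro ⟨f, hf⟩; ext i; exact i.elim0⟩
    exact Nat.card_unique
  · have : IsEmpty {f : Fin 0 → ZMod 3 // (∀ i, f i ≠ 0) ∧ ∑ i, f i = r} :=
      ⟨by rintro ⟨f, -, hs⟩; simp at hs; exact h hs.symm⟩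
    exact Nat.card_of_isEmpty

private lemma cnt_succ (n : ℕ) (r : ZMod 3) :
    cnt (n + 1) r = cnt n (r - 1) + cnt n (r - 2) := by
  have e : {f : Fin (n+1) → ZMod 3 // (∀ i, f i ≠ 0) ∧ ∑ i, f i = r} ≃
      (Σ a : ZMod 3, {g : Fin n → ZMod 3 //
        (a ≠ 0 ∧ ∀ i, g i ≠ 0) ∧ a + ∑ i, g i = r}) :=
    { toFun := fun f => ⟨f.1 0, Fin.tail f.1,
        ⟨⟨f.2.1 0, fun i => f.2.1 i.succ⟩, by
          simpa [Fin.sum_univ_succ, Fin.tail] using f.2.2⟩⟩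
      invFun := fun x => ⟨Fin.cons x.1 x.2.1, by
        refine ⟨fun i => ?_, ?_⟩
        · induction i using Fin.cases with
          | zero => simpa using x.2.2.1.1
          | succ j => simpa using x.2.2.1.2 j
        · rw [Fin.sum_univ_succ]; simpa using x.2.2.2⟩
      left_inv := fun f => Subtype.ext (Fin.cons_self_tail f.1)
      right_inv := fun x => by
        obtain ⟨a, g, h⟩ := x
        simp [Fin.tail_cons]
        rfl }
  have h0 : IsEmpty {g : Fin n → ZMod 3 //
      ((0 : ZMod 3) ≠ 0 ∧ ∀ i, g i ≠ 0) ∧ (0 : ZMod 3) + ∑ i, g i = r} :=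
    ⟨by rintro ⟨g, ⟨⟨h, -⟩, -⟩⟩; exact h rfl⟩
  have e1 : {g : Fin n → ZMod 3 //
      ((1 : ZMod 3) ≠ 0 ∧ ∀ i, g i ≠ 0) ∧ (1 : ZMod 3) + ∑ i, g i = r} ≃
      {g : Fin n → ZMod 3 // (∀ i, g i ≠ 0) ∧ ∑ i, g i = r - 1} :=
    Equiv.subtypeEquivRight (fun g => by
      constructor
      · rintro ⟨⟨-, hg⟩, hs⟩; exact ⟨hg, by rw [← hs]; ring⟩
      · rintro ⟨hg, hs⟩; exact ⟨⟨by decide, hg⟩, by rw [hs]; ring⟩)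
  have e2 : {g : Fin n → ZMod 3 //
      ((2 : ZMod 3) ≠ 0 ∧ ∀ i, g i ≠ 0) ∧ (2 : ZMod 3) + ∑ i, g i = r} ≃
      {g : Fin n → ZMod 3 // (∀ i, g i ≠ 0) ∧ ∑ i, g i = r - 2} :=
    Equiv.subtypeEquivRight (fun g => by
      constructor
      · rintro ⟨⟨-, hg⟩, hs⟩; exact ⟨hg, by rw [← hs]; ring⟩
      · rintro ⟨hg, hs⟩; exact ⟨⟨by decide, hg⟩, by rw [hs]; ring⟩)
  unfold cnt
  rw [Nat.card_congr e, Nat.card_eq_fintype_card, Fintype.card_sigma]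
  rw [show (univ : Finset (ZMod 3)) = {0, 1, 2} by decide]
  rw [Finset.sum_insert (by decide), Finset.sum_insert (by decide),
    Finset.sum_singleton]
  haveI := h0
  rw [Fintype.card_of_isEmpty, Fintype.card_congr e1, Fintype.card_congr e2,
    Nat.card_eq_fintype_card, Nat.card_eq_fintype_card]
  exact zero_add _

private lemma cnt_key (n : ℕ) :
    3 * (cnt n 0 : ℤ) = 2 ^ n + 2 * (-1 : ℤ) ^ n ∧
    3 * (cnt n 1 : ℤ) = 2 ^ n - (-1 : ℤ) ^ n ∧
    3 * (cnt n 2 : ℤ) = 2 ^ n - (-1 : ℤ) ^ n := by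
  induction n with
  | zero =>
    simp [cnt_zero, show (1 : ZMod 3) ≠ 0 by decide, show (2 : ZMod 3) ≠ 0 by decide]
  | succ n ih =>
    obtain ⟨h0, h1, h2⟩ := ih
    rw [cnt_succ, cnt_succ, cnt_succ]
    simp only [show (0 : ZMod 3) - 1 = 2 by decide, show (0 : ZMod 3) - 2 = 1 by decide,
      show (1 : ZMod 3) - 1 = 0 by decide, show (1 : ZMod 3) - 2 = 2 by decide,
      show (2 : ZMod 3) - 1 = 1 by decide, show (2 : ZMod 3) - 2 = 0 by decide]
    push_cast
    refine ⟨?_, ?_, ?_⟩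
    · rw [pow_succ, pow_succ]; linear_combination h1 + h2
    · rw [pow_succ, pow_succ]; linear_combination h0 + h2
    · rw [pow_succ, pow_succ]; linear_combination h0 + h1

/-- Counting identity of §13.8: for `r ≠ 0` in `ℤ/3ℤ`, the number `N` of functions
`f : Fin n → ℤ/3ℤ` with `f i ≠ 0` for all `i` and `∑ i, f i = r` satisfies
`3N = 2ⁿ − (−1)ⁿ`. -/
theorem statement11 (r : ZMod 3) (hr : r ≠ 0) (n : ℕ) :
    3 * (Nat.card {f : Fin n → ZMod 3 // (∀ i, f i ≠ 0) ∧ ∑ i, f i = r} : ℤ) =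
      2 ^ n - (-1 : ℤ) ^ n := by
  have := cnt_key n
  fin_cases r
  · exact absurd rfl hr
  · exact this.2.1
  · exact this.2.2
end

section
/- Let R be a commutative ring and q, t ∈ R with t² = q. Define the 2×2 matrices T₀ = [[−1, t], [0, q]], T₁ = [[q, 0], [t, −1]], T₂ = [[−1, t·(q² − q + 1)], [0, q³]] over R. Then: (T₀ + 1)(T₀ − q·1) = 0, (T₁ + 1)(T₁ − q·1) = 0, (T₂ + 1)(T₂ − q³·1) = 0, T₀T₂ = T₂T₀, T₀T₁T₀ = T₁T₀T₁, and (T₁T₂)³ = q⁶·1 = (T₂T₁)³. Hence T₀, T₁, T₂ satisfy the quadratic and braid relations of the Iwahori–Hecke algebra of the affine Weyl group of type G₂ with parameters (q, q, q³), defining the 2-dimensional module V₂ of Appendix B (the self-dual extension with real exponents (1,−1,0) and (−1,1,0)) used in Theorem B.1 (T:degen_E). -/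
/-- The matrices defining the 2-dimensional module `V₂` of Appendix B satisfy the
quadratic and braid relations of the Iwahori–Hecke algebra of the affine Weyl group of
type `G₂` with parameters `(q, q, q³)`. -/
theorem statement13 (R : Type*) [CommRing R] (q t : R) (ht : t ^ 2 = q)
    (T₀ T₁ T₂ : Matrix (Fin 2) (Fin 2) R)
    (h0 : T₀ = !![-1, t; 0, q])
    (h1 : T₁ = !![q, 0; t, -1])
    (h2 : T₂ = !![-1, t * (q ^ 2 - q + 1); 0, q ^ 3]) :
    (T₀ + 1) * (T₀ - q • 1) = 0 ∧
    (T₁ + 1) * (T₁ - q • 1) = 0 ∧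
    (T₂ + 1) * (T₂ - q ^ 3 • 1) = 0 ∧
    T₀ * T₂ = T₂ * T₀ ∧
    T₀ * T₁ * T₀ = T₁ * T₀ * T₁ ∧
    (T₁ * T₂) ^ 3 = q ^ 6 • 1 ∧
    (T₂ * T₁) ^ 3 = q ^ 6 • 1 := by
  subst ht h0 h1 h2
  refine ⟨?_, ?_, ?_, ?_, ?_, ?_, ?_⟩ <;>
    · ext i j
      fin_cases i <;> fin_cases j <;>
        simp [pow_succ, Matrix.mul_apply, Fin.sum_univ_succ, Matrix.one_apply] <;> ring
end
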